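/- Let b = (b_1,…,b_k) ∈ ℝ^k, let S = {j_1,…,j_k} ⊆ {1,…,N}, and for each j let Ũ_j ∈ ℝ^{M×Nm} be the block matrix whose j-th M×m block equals U_j and whose other blocks are zero. Then ‖∑_{ℓ=1}^k b_ℓ Ũ_{j_ℓ}‖_{2→2} ≤ ‖b‖_∞ · √( 1 + max_{i ∈ S} ∑_{j ∈ S, j ≠ i} λ_max(P_i P_j)^{1/2} ), where λ_max denotes the largest eigenvalue and P_j = U_j U_j^T. -/

import Mathlib

/-!
Write `v` blockwise as `(w_j)_j`; then `(∑ b_ℓ Ũ_{σ ℓ}) v = ∑ b_ℓ U_{σ ℓ} w_{σ ℓ}`, so its squared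
norm is a double sum of `b_ℓ b_ℓ' ⟨U_i w_i, U_j w_j⟩`. The diagonal terms equal `b_ℓ² ‖w_{σ ℓ}‖²`.
Off the diagonal, `|⟨U_i x, U_j y⟩| ≤ λ_max(P_i P_j)^{1/2} ‖x‖ ‖y‖`: `‖U_jᵀ U_i‖²` is the top
eigenvalue of `U_iᵀ P_j U_i`, and `U_i` maps its eigenvectors to eigenvectors of `P_i P_j`.
A Schur test with row sums at most `1 + max_i ∑_{j ≠ i} λ_max(P_i P_j)^{1/2}` then bounds the
double sum by `‖b‖_∞² (1 + …) ‖v‖²`.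
-/

open scoped BigOperators
open Matrix

/-- Euclidean norm of a finite-dimensional real vector. -/
noncomputable def norm2 {ι : Type*} [Fintype ι] (v : ι → ℝ) : ℝ :=
  Real.sqrt (∑ i, v i ^ 2)

/-- The ℓ₂ → ℓ₂ operator norm of a real matrix. -/
noncomputable def opNorm {ι κ : Type*} [Fintype ι] [Fintype κ]
    (B : Matrix ι κ ℝ) : ℝ :=
  sSup {r : ℝ | ∃ v : κ → ℝ, norm2 v ≤ 1 ∧ r = norm2 (B.mulVec v)}

/-- Ũ_j ∈ ℝ^{M×Nm}: the horizontal concatenation of N blocks of size M×m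
whose j-th block is U_j and whose other blocks are zero. -/
noncomputable def Utilde {N M m : ℕ} (U : Fin N → Matrix (Fin M) (Fin m) ℝ)
    (j : Fin N) : Matrix (Fin M) (Fin N × Fin m) ℝ :=
  Matrix.of fun i p => if p.1 = j then U j i p.2 else 0

/-- λ_max(B): the largest real eigenvalue of B (as a supremum over the set
of real eigenvalues). -/
noncomputable def lamMax {M : ℕ} (B : Matrix (Fin M) (Fin M) ℝ) : ℝ :=
  sSup {r : ℝ | ∃ v : Fin M → ℝ, v ≠ 0 ∧ B.mulVec v = r • v}

section Norm2

variable {ι : Type*} [Fintype ι]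

theorem dotProduct_self_nonneg (v : ι → ℝ) : 0 ≤ v ⬝ᵥ v :=
  Finset.sum_nonneg fun i _ => mul_self_nonneg (v i)

theorem norm2_nonneg (v : ι → ℝ) : 0 ≤ norm2 v :=
  Real.sqrt_nonneg _

theorem norm2_eq_sqrt_dotProduct (v : ι → ℝ) : norm2 v = √(v ⬝ᵥ v) := by
  simp [norm2, dotProduct, sq]

theorem norm2_sq (v : ι → ℝ) : norm2 v ^ 2 = v ⬝ᵥ v := by
  rw [norm2_eq_sqrt_dotProduct, Real.sq_sqrt (dotProduct_self_nonneg v)]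

theorem abs_dotProduct_le_norm2_mul_norm2 (x y : ι → ℝ) :
    |x ⬝ᵥ y| ≤ norm2 x * norm2 y := by
  rw [norm2, norm2, ← Real.sqrt_sq_eq_abs, ← Real.sqrt_mul (by positivity)]
  exact Real.sqrt_le_sqrt (Finset.sum_mul_sq_le_sq_mul_sq Finset.univ x y)

theorem opNorm_le_of_dotProduct_le {κ : Type*} [Fintype κ] {B : Matrix ι κ ℝ} {C : ℝ}
    (hC : 0 ≤ C) (h : ∀ v, (B *ᵥ v) ⬝ᵥ (B *ᵥ v) ≤ C ^ 2 * (v ⬝ᵥ v)) : opNorm B ≤ C := by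
  refine Real.sSup_le ?_ hC
  rintro _ ⟨v, hv, rfl⟩
  calc norm2 (B *ᵥ v) ≤ √(C ^ 2 * (v ⬝ᵥ v)) := by
        rw [norm2_eq_sqrt_dotProduct]; exact Real.sqrt_le_sqrt (h v)
    _ = C * norm2 v := by
        rw [Real.sqrt_mul (sq_nonneg C), Real.sqrt_sq hC, norm2_eq_sqrt_dotProduct]
    _ ≤ C := mul_le_of_le_one_right hC hv

end Norm2

open scoped MatrixOrder in
theorem Matrix.IsHermitian.dotProduct_mulVec_le_of_spectrum_le {n : Type*} [Fintype n]
    [DecidableEq n] {G : Matrix n n ℝ} (hG : G.IsHermitian) {r : ℝ}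
    (h : ∀ μ ∈ spectrum ℝ G, μ ≤ r) (x : n → ℝ) : x ⬝ᵥ G *ᵥ x ≤ r * (x ⬝ᵥ x) := by
  have := (le_algebraMap_of_spectrum_le h hG.isSelfAdjoint).dotProduct_mulVec_nonneg x
  simpa [sub_mulVec, Algebra.algebraMap_eq_smul_one, smul_mulVec, dotProduct_smul] using this

theorem Matrix.IsHermitian.exists_eigenvector_dotProduct_mulVec_le {n : Type*} [Fintype n]
    [DecidableEq n] [Nonempty n] {G : Matrix n n ℝ} (hG : G.IsHermitian) :
    ∃ μ, ∃ v : n → ℝ, v ≠ 0 ∧ G *ᵥ v = μ • v ∧ ∀ x, x ⬝ᵥ G *ᵥ x ≤ μ * (x ⬝ᵥ x) := by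
  obtain ⟨i, -, hi⟩ := Finset.univ.exists_max_image hG.eigenvalues Finset.univ_nonempty
  refine ⟨hG.eigenvalues i, _, fun h => ?_, hG.mulVec_eigenvectorBasis i,
    hG.dotProduct_mulVec_le_of_spectrum_le ?_⟩
  · exact hG.eigenvectorBasis.orthonormal.ne_zero i (by simpa using congrArg (WithLp.toLp 2) h)
  · rw [hG.spectrum_real_eq_range_eigenvalues]
    rintro _ ⟨j, rfl⟩
    exact hi j (Finset.mem_univ j)

theorem le_lamMax {M : ℕ} {B : Matrix (Fin M) (Fin M) ℝ} {r : ℝ} {v : Fin M → ℝ} (hv : v ≠ 0)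
    (hBv : B *ᵥ v = r • v) : r ≤ lamMax B := by
  refine le_csSup ((Module.End.finite_hasEigenvalue (toLin' B)).subset ?_).bddAbove ⟨v, hv, hBv⟩
  rintro μ ⟨w, hw, hBw⟩
  exact Module.End.hasEigenvalue_of_hasEigenvector ⟨by simpa [Module.End.mem_eigenspace_iff], hw⟩

theorem mulVec_dotProduct_mulVec_self_of_transpose_mul_eq_one {l m : Type*} [Fintype l]
    [Fintype m] [DecidableEq m] {U : Matrix l m ℝ} (hU : Uᵀ * U = 1) (x : m → ℝ) :
    (U *ᵥ x) ⬝ᵥ (U *ᵥ x) = x ⬝ᵥ x := by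
  rw [dotProduct_mulVec, ← mulVec_transpose, mulVec_mulVec, hU, one_mulVec]

/-- An eigenvector `u` of `(Vᵀ U)ᵀ (Vᵀ U) = Uᵀ P_V U` for its top eigenvalue gives the eigenvector
`U u` of `P_U P_V`, so `‖Vᵀ U‖² ≤ λ_max(P_U P_V)`. -/
theorem abs_mulVec_dotProduct_mulVec_le {M : ℕ} {m n : Type*} [Fintype m] [DecidableEq m]
    [Fintype n] {U : Matrix (Fin M) m ℝ} (V : Matrix (Fin M) n ℝ) (hU : Uᵀ * U = 1) (x : m → ℝ)
    (y : n → ℝ) :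
    |(U *ᵥ x) ⬝ᵥ (V *ᵥ y)| ≤ √(lamMax ((U * Uᵀ) * (V * Vᵀ))) * (norm2 x * norm2 y) := by
  rcases isEmpty_or_nonempty m with hm | hm
  · simp only [Subsingleton.elim x 0, mulVec_zero, zero_dotProduct, abs_zero]
    exact mul_nonneg (Real.sqrt_nonneg _) (mul_nonneg (norm2_nonneg _) (norm2_nonneg _))
  set D := Vᵀ * U
  have hG : (Dᵀ * D).IsHermitian := by
    simpa [conjTranspose_eq_transpose_of_trivial] using isHermitian_conjTranspose_mul_self D
  obtain ⟨μ, u, hu, hGu, hμ⟩ := hG.exists_eigenvector_dotProduct_mulVec_le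
  have hUu : U *ᵥ u ≠ 0 := fun h => hu <| by
    simpa [mulVec_mulVec, hU] using congrArg (Uᵀ *ᵥ ·) h
  have hμ_le : μ ≤ lamMax ((U * Uᵀ) * (V * Vᵀ)) := by
    refine le_lamMax hUu ?_
    rw [mulVec_mulVec, ← mulVec_smul, ← hGu, mulVec_mulVec]
    simp only [D, transpose_mul, transpose_transpose, Matrix.mul_assoc]
  have hDx : norm2 (D *ᵥ x) ≤ √μ * norm2 x := by
    rw [norm2_eq_sqrt_dotProduct, norm2_eq_sqrt_dotProduct,
      ← Real.sqrt_mul' _ (dotProduct_self_nonneg x)]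
    refine Real.sqrt_le_sqrt ?_
    simpa [dotProduct_mulVec, vecMul_vecMul, ← mulVec_transpose, mulVec_mulVec] using hμ x
  calc |(U *ᵥ x) ⬝ᵥ (V *ᵥ y)| = |(D *ᵥ x) ⬝ᵥ y| := by
        rw [dotProduct_mulVec, ← mulVec_transpose, mulVec_mulVec]
    _ ≤ norm2 (D *ᵥ x) * norm2 y := abs_dotProduct_le_norm2_mul_norm2 _ _
    _ ≤ √μ * norm2 x * norm2 y := by gcongr; exact norm2_nonneg y
    _ ≤ √(lamMax ((U * Uᵀ) * (V * Vᵀ))) * (norm2 x * norm2 y) := by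
        rw [← mul_assoc]; gcongr <;> exact norm2_nonneg _

/-- A Schur test. `K` need not be symmetric: by symmetry of `t`, `|t i j|` is bounded by
`min (K i j) (K j i) * (a i * a j)`. -/
theorem sum_sum_le_of_abs_le_mul {ι : Type*} [Fintype ι] {t K : ι → ι → ℝ} {a : ι → ℝ}
    (ht : ∀ i j, t i j = t j i) (hK : ∀ i j, 0 ≤ K i j)
    (h : ∀ i j, |t i j| ≤ K i j * (a i * a j)) :
    ∑ i, ∑ j, t i j ≤ ∑ i, a i ^ 2 * ∑ j, K i j := by
  have hpair : ∀ i j, t i j ≤ (K i j * a i ^ 2 + K j i * a j ^ 2) / 2 := by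
    intro i j
    have h₁ := (le_abs_self _).trans (h i j)
    have h₂ := (le_abs_self _).trans (ht i j ▸ h j i)
    rcases le_total (K i j) (K j i) with hle | hle
    · nlinarith [hK i j, mul_nonneg (hK i j) (sq_nonneg (a i - a j)),
        mul_nonneg (sub_nonneg.2 hle) (sq_nonneg (a j))]
    · nlinarith [hK j i, mul_nonneg (hK j i) (sq_nonneg (a i - a j)),
        mul_nonneg (sub_nonneg.2 hle) (sq_nonneg (a i))]
  calc ∑ i, ∑ j, t i j ≤ ∑ i, ∑ j, (K i j * a i ^ 2 + K j i * a j ^ 2) / 2 :=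
        Finset.sum_le_sum fun i _ => Finset.sum_le_sum fun j _ => hpair i j
    _ = ∑ i, a i ^ 2 * ∑ j, K i j := by
        simp only [← Finset.sum_div, Finset.sum_add_distrib]
        rw [Finset.sum_comm (f := fun i j => K j i * a j ^ 2)]
        simp only [add_self_div_two, Finset.mul_sum, mul_comm (a _ ^ 2) (K _ _)]

theorem sum_ite_eq_add_sum_erase {ι α : Type*} [Fintype ι] [DecidableEq ι] [AddCommMonoid α]
    (a : α) (c : ι → ι → α) (i : ι) :
    ∑ j, (if i = j then a else c i j) = a + ∑ j ∈ Finset.univ.erase i, c i j := by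
  rw [← Finset.add_sum_erase _ _ (Finset.mem_univ i), if_pos rfl]
  congr 1
  exact Finset.sum_congr rfl fun j hj => if_neg (Finset.ne_of_mem_erase hj).symm

theorem sum_dotProduct_self_comp_le {ι κ μ : Type*} [Fintype ι] [Fintype κ] [Fintype μ]
    {σ : ι → κ} (hσ : Function.Injective σ) (v : κ × μ → ℝ) :
    ∑ ℓ, (fun p => v (σ ℓ, p)) ⬝ᵥ (fun p => v (σ ℓ, p)) ≤ v ⬝ᵥ v := by
  classical
  calc ∑ ℓ, (fun p => v (σ ℓ, p)) ⬝ᵥ (fun p => v (σ ℓ, p))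
      = ∑ j ∈ Finset.univ.image σ, ∑ p, v (j, p) * v (j, p) :=
        (Finset.sum_image (f := fun j => ∑ p, v (j, p) * v (j, p)) fun _ _ _ _ h => hσ h).symm
    _ ≤ ∑ j, ∑ p, v (j, p) * v (j, p) :=
        Finset.sum_le_sum_of_subset_of_nonneg (Finset.subset_univ _)
          fun _ _ _ => Finset.sum_nonneg fun _ _ => mul_self_nonneg _
    _ = v ⬝ᵥ v := (Fintype.sum_prod_type fun x => v x * v x).symm

theorem Utilde_mulVec {N M m : ℕ} (U : Fin N → Matrix (Fin M) (Fin m) ℝ) (j : Fin N)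
    (v : Fin N × Fin m → ℝ) : Utilde U j *ᵥ v = U j *ᵥ fun p => v (j, p) := by
  ext i
  simp only [mulVec, dotProduct, Utilde, of_apply, Fintype.sum_prod_type, ite_mul, zero_mul]
  rw [Finset.sum_eq_single j (fun j' _ hj' => by simp [hj']) (by simp)]
  simp

theorem dotProduct_self_sum_smul_Utilde_mulVec_le {N M m k : ℕ}
    (U : Fin N → Matrix (Fin M) (Fin m) ℝ) (hU : ∀ j, (U j)ᵀ * U j = 1)
    (b : Fin k → ℝ) {σ : Fin k → Fin N} (hσ : Function.Injective σ) {B D : ℝ}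
    (hB : ∀ ℓ, |b ℓ| ≤ B) (hD : 0 ≤ D)
    (hrow : ∀ ℓ, ∑ ℓ' ∈ Finset.univ.erase ℓ,
      √(lamMax ((U (σ ℓ) * (U (σ ℓ))ᵀ) * (U (σ ℓ') * (U (σ ℓ'))ᵀ))) ≤ D)
    (v : Fin N × Fin m → ℝ) :
    ((∑ ℓ, b ℓ • Utilde U (σ ℓ)) *ᵥ v) ⬝ᵥ ((∑ ℓ, b ℓ • Utilde U (σ ℓ)) *ᵥ v)
      ≤ B ^ 2 * (1 + D) * (v ⬝ᵥ v) := by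
  set w : Fin k → Fin m → ℝ := fun ℓ p => v (σ ℓ, p)
  set c : Fin k → Fin k → ℝ := fun ℓ ℓ' =>
    √(lamMax ((U (σ ℓ) * (U (σ ℓ))ᵀ) * (U (σ ℓ') * (U (σ ℓ'))ᵀ)))
  set K : Fin k → Fin k → ℝ := fun ℓ ℓ' => B ^ 2 * if ℓ = ℓ' then 1 else c ℓ ℓ'
  have hAv : (∑ ℓ, b ℓ • Utilde U (σ ℓ)) *ᵥ v = ∑ ℓ, b ℓ • (U (σ ℓ) *ᵥ w ℓ) := by
    simp only [sum_mulVec, smul_mulVec, Utilde_mulVec, w]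
  have hbb : ∀ ℓ ℓ', |b ℓ * b ℓ'| ≤ B ^ 2 := fun ℓ ℓ' => by
    rw [abs_mul, sq]
    exact mul_le_mul (hB ℓ) (hB ℓ') (abs_nonneg _) ((abs_nonneg _).trans (hB ℓ))
  have hgram : ∀ ℓ ℓ', |(U (σ ℓ) *ᵥ w ℓ) ⬝ᵥ (U (σ ℓ') *ᵥ w ℓ')|
      ≤ (if ℓ = ℓ' then 1 else c ℓ ℓ') * (norm2 (w ℓ) * norm2 (w ℓ')) := by
    intro ℓ ℓ'
    split_ifs with h
    · subst h
      rw [mulVec_dotProduct_mulVec_self_of_transpose_mul_eq_one (hU _), one_mul, ← sq, norm2_sq,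
        abs_of_nonneg (dotProduct_self_nonneg _)]
    · exact abs_mulVec_dotProduct_mulVec_le _ (hU _) _ _
  have hschur := sum_sum_le_of_abs_le_mul
    (t := fun ℓ ℓ' => b ℓ * b ℓ' * ((U (σ ℓ) *ᵥ w ℓ) ⬝ᵥ (U (σ ℓ') *ᵥ w ℓ')))
    (K := K) (a := fun ℓ => norm2 (w ℓ))
    (fun ℓ ℓ' => by rw [mul_comm (b ℓ), dotProduct_comm])
    (fun ℓ ℓ' => mul_nonneg (sq_nonneg B) (by split_ifs <;> positivity))
    (fun ℓ ℓ' => by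
      rw [abs_mul, mul_assoc]
      exact mul_le_mul (hbb ℓ ℓ') (hgram ℓ ℓ') (abs_nonneg _) (sq_nonneg B))
  have hKrow : ∀ ℓ, ∑ ℓ', K ℓ ℓ' ≤ B ^ 2 * (1 + D) := fun ℓ => by
    rw [← Finset.mul_sum, sum_ite_eq_add_sum_erase]
    exact mul_le_mul_of_nonneg_left ((add_le_add_iff_left 1).2 (hrow ℓ)) (sq_nonneg B)
  calc ((∑ ℓ, b ℓ • Utilde U (σ ℓ)) *ᵥ v) ⬝ᵥ ((∑ ℓ, b ℓ • Utilde U (σ ℓ)) *ᵥ v)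
      = ∑ ℓ, ∑ ℓ', b ℓ * b ℓ' * ((U (σ ℓ) *ᵥ w ℓ) ⬝ᵥ (U (σ ℓ') *ᵥ w ℓ')) := by
        simp only [hAv, sum_dotProduct, dotProduct_sum, smul_dotProduct, dotProduct_smul,
          smul_eq_mul, Finset.mul_sum]
        refine Finset.sum_congr rfl fun ℓ _ => Finset.sum_congr rfl fun ℓ' _ => ?_
        rw [dotProduct_comm]
        ring
    _ ≤ ∑ ℓ, norm2 (w ℓ) ^ 2 * (B ^ 2 * (1 + D)) :=
        hschur.trans (Finset.sum_le_sum fun ℓ _ =>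
          mul_le_mul_of_nonneg_left (hKrow ℓ) (sq_nonneg _))
    _ ≤ B ^ 2 * (1 + D) * (v ⬝ᵥ v) := by
        rw [← Finset.sum_mul, mul_comm]
        simp only [norm2_sq]
        exact mul_le_mul_of_nonneg_left (sum_dotProduct_self_comp_le hσ v) (by positivity)

/-- Operator norm bound:
‖∑_ℓ b_ℓ Ũ_{j_ℓ}‖₂→₂ ≤ ‖b‖_∞ √(1 + max_{i∈S} ∑_{j∈S, j≠i} λ_max(P_iP_j)^{1/2}). -/
theorem stmt12 {N M m k : ℕ}
    (U : Fin N → Matrix (Fin M) (Fin m) ℝ)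
    (hU : ∀ j, (U j)ᵀ * U j = 1)
    (b : Fin k → ℝ) (σ : Fin k → Fin N) (hσ : Function.Injective σ) :
    opNorm (∑ ℓ, b ℓ • Utilde U (σ ℓ)) ≤
      (⨆ ℓ, |b ℓ|) * Real.sqrt (1 +
        sSup {r : ℝ | ∃ i ∈ Finset.univ.image σ,
          r = ∑ j ∈ (Finset.univ.image σ).erase i,
            Real.sqrt (lamMax ((U i * (U i)ᵀ) * (U j * (U j)ᵀ)))}) := by
  set f : Fin N → ℝ := fun i => ∑ j ∈ (Finset.univ.image σ).erase i,
    √(lamMax ((U i * (U i)ᵀ) * (U j * (U j)ᵀ)))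
  set T := {r : ℝ | ∃ i ∈ Finset.univ.image σ, r = f i}
  have hT : BddAbove T := by
    refine (((Finset.univ.image σ).finite_toSet.image f).subset ?_).bddAbove
    rintro _ ⟨i, hi, rfl⟩
    exact ⟨i, hi, rfl⟩
  have hD : 0 ≤ sSup T := Real.sSup_nonneg <| by
    rintro _ ⟨i, -, rfl⟩
    exact Finset.sum_nonneg fun _ _ => Real.sqrt_nonneg _
  have hrow : ∀ ℓ, ∑ ℓ' ∈ Finset.univ.erase ℓ,
      √(lamMax ((U (σ ℓ) * (U (σ ℓ))ᵀ) * (U (σ ℓ') * (U (σ ℓ'))ᵀ))) ≤ sSup T := fun ℓ => by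
    refine le_csSup hT ⟨σ ℓ, Finset.mem_image_of_mem _ (Finset.mem_univ ℓ), ?_⟩
    simp only [f]
    rw [← Finset.image_erase hσ, Finset.sum_image fun _ _ _ _ h => hσ h]
  have hB : ∀ ℓ, |b ℓ| ≤ ⨆ ℓ', |b ℓ'| := le_ciSup (Set.finite_range _).bddAbove
  refine opNorm_le_of_dotProduct_le
    (mul_nonneg (Real.iSup_nonneg fun _ => abs_nonneg _) (Real.sqrt_nonneg _)) fun v => ?_
  rw [mul_pow, Real.sq_sqrt (by linarith)]
  exact dotProduct_self_sum_smul_Utilde_mulVec_le U hU b hσ hB hD hrow v
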